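/- Let G be a graph. The maximal exchangeable pairs of tubes of G (pairs {t,t'} with t \ {v} = t' \ {v'} for the unique neighbor v of t' in t \ t' and the unique neighbor v' of t in t' \ t) are exactly the pairs {s \ {v'}, s \ {v}} where s is a tube of G and v ≠ v' are two non-disconnecting vertices of s. -/

import Mathlib

open scoped Classical

variable {V : Type*} [Fintype V] [DecidableEq V]

/-- A tube of `G`: a nonempty vertex subset inducing a connected subgraph. -/
def IsTube (G : SimpleGraph V) (t : Finset V) : Prop :=
  t.Nonempty ∧ (G.induce (t : Set V)).Connected

/-- The set of all tubes of `G`. -/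
noncomputable def tubes (G : SimpleGraph V) : Finset (Finset V) :=
  Finset.univ.powerset.filter (fun t => IsTube G t)

/-- Compatibility of tubes: nested, or disjoint with non-tube union. -/
def Compatible (G : SimpleGraph V) (t t' : Finset V) : Prop :=
  t ⊆ t' ∨ t' ⊆ t ∨ (t ∩ t' = ∅ ∧ ¬ IsTube G (t ∪ t'))

/-- A tubing on `G`: pairwise compatible tubes containing all connected components
(that is, all inclusion-maximal tubes). -/
def IsTubing (G : SimpleGraph V) (T : Finset (Finset V)) : Prop :=
  (∀ t ∈ T, IsTube G t) ∧
  (∀ t ∈ T, ∀ t' ∈ T, Compatible G t t') ∧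
  (∀ K : Finset V, IsTube G K → (∀ t : Finset V, IsTube G t → K ⊆ t → K = t) → K ∈ T)

/-- A maximal tubing on `G`. -/
def IsMaxTubing (G : SimpleGraph V) (T : Finset (Finset V)) : Prop :=
  IsTubing G T ∧ ∀ T', IsTubing G T' → T ⊆ T' → T = T'

/-- Two tubes are exchangeable if two maximal tubings differ exactly by them. -/
def ExchangeableT (G : SimpleGraph V) (t t' : Finset V) : Prop :=
  t ≠ t' ∧ ∃ T T', IsMaxTubing G T ∧ IsMaxTubing G T' ∧ t ∈ T ∧ t' ∈ T' ∧
    T.erase t = T'.erase t'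

/-- `u` is a neighbor of the vertex set `s`: `u ∉ s` and `u` is adjacent to some vertex of `s`. -/
def NbrOf (G : SimpleGraph V) (s : Finset V) (u : V) : Prop :=
  u ∉ s ∧ ∃ x ∈ s, G.Adj u x

/-- Connected components of the induced subgraph on `U`:
inclusion-maximal tubes contained in `U`. -/
noncomputable def gccSet (G : SimpleGraph V) (U : Finset V) : Finset (Finset V) :=
  (tubes G).filter (fun K => K ⊆ U ∧ ∀ C : Finset V, IsTube G C → C ⊆ U → K ⊆ C → K = C)

/-- Characteristic vector of a subset of `V` in `ℝ^V`. -/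
def chi (S : Finset V) : V → ℝ := fun v => if v ∈ S then 1 else 0

/-- `w` is a non-disconnecting vertex of the set `s`. -/
def NonDisc (G : SimpleGraph V) (s : Finset V) (w : V) : Prop :=
  w ∈ s ∧ (s.erase w = ∅ ∨ IsTube G (s.erase w))

/-- A maximal exchangeable pair of tubes. -/
def MaxExchPair (G : SimpleGraph V) (t t' : Finset V) : Prop :=
  ExchangeableT G t t' ∧
  ∃ v v', t \ t' = {v} ∧ t' \ t = {v'} ∧ NbrOf G t' v ∧ NbrOf G t v'

/-!
If `{t, t'}` is a maximal exchangeable pair, `t'` has a neighbour in `t`, so `s = t ∪ t'` is a tube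
with `s \ {v} = t'` and `s \ {v'} = t`. Conversely, extend `s`, `s \ {v'}` and the connected
components of `s \ {v, v'}` to a maximal tubing `T`. A tube compatible with all of these, other
than `s \ {v'}`, is also compatible with `s \ {v}`: the only delicate case is a tube inside
`s \ {v'}` through `v`, and such a tube must contain every component, hence equals `s \ {v'}`.
By symmetry in `v, v'`, replacing `s \ {v'}` by `s \ {v}` in `T` gives another maximal tubing.
-/

omit [Fintype V] in
lemma union_erase_of_sdiff_eq_singleton {t t' : Finset V} {v' : V} (h : t' \ t = {v'}) :
    (t ∪ t').erase v' = t := by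
  ext x
  have hx : x ∈ t' \ t ↔ x = v' := by rw [h, Finset.mem_singleton]
  grind

namespace IsTube

variable {G : SimpleGraph V} {s A B : Finset V}

omit [Fintype V] [DecidableEq V] in
lemma singleton (G : SimpleGraph V) (x : V) : IsTube G {x} := by
  refine ⟨Finset.singleton_nonempty x, ?_⟩
  rw [Finset.coe_singleton, SimpleGraph.induce_singleton_eq_top]
  exact SimpleGraph.connected_top

omit [Fintype V] in
lemma union_of_adj (hA : IsTube G A) (hB : IsTube G B) {a b : V} (ha : a ∈ A) (hb : b ∈ B)
    (hab : G.Adj a b) : IsTube G (A ∪ B) :=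
  ⟨hA.1.mono Finset.subset_union_left, by
    rw [Finset.coe_union]
    exact G.connected_induce_union hA.2.preconnected hB.2.preconnected ha hb hab⟩

omit [Fintype V] in
lemma union_of_inter (hA : IsTube G A) (hB : IsTube G B) (h : (A ∩ B).Nonempty) :
    IsTube G (A ∪ B) :=
  ⟨hA.1.mono Finset.subset_union_left, by
    rw [Finset.coe_union]
    exact G.induce_union_connected hA.2.preconnected hB.2.preconnected (by exact_mod_cast h)⟩

omit [Fintype V] [DecidableEq V] in
lemma exists_adj_of_mem_of_notMem (hs : IsTube G s) {a b : V} (ha : a ∈ s) (hb : b ∈ s)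
    (haA : a ∈ A) (hbA : b ∉ A) : ∃ x ∈ A, ∃ y ∈ s, y ∉ A ∧ G.Adj x y := by
  obtain ⟨p⟩ := hs.2.preconnected ⟨a, ha⟩ ⟨b, hb⟩
  obtain ⟨d, -, hx, hy⟩ := p.exists_boundary_dart {z | z.1 ∈ A} haA hbA
  exact ⟨d.fst, hx, d.snd, d.snd.2, hy, d.adj⟩

omit [Fintype V] in
lemma nbrOf_erase (hs : IsTube G s) {v v' : V} (hv : v ∈ s) (hv' : v' ∈ s) (hne : v ≠ v') :
    NbrOf G (s.erase v) v := by
  obtain ⟨x, hx, y, hy, hyv, hxy⟩ :=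
    hs.exists_adj_of_mem_of_notMem (A := {v}) hv hv' (Finset.mem_singleton_self v)
      (by simpa using hne.symm)
  rw [Finset.mem_singleton] at hx hyv
  exact ⟨Finset.notMem_erase v s, y, Finset.mem_erase.2 ⟨hyv, hy⟩, hx ▸ hxy⟩

end IsTube

section Compatible

variable {G : SimpleGraph V} {A B : Finset V}

omit [Fintype V] in
lemma compatible_refl (A : Finset V) : Compatible G A A := Or.inl subset_rfl

omit [Fintype V] in
lemma Compatible.symm (h : Compatible G A B) : Compatible G B A := by
  rcases h with h | h | ⟨h₁, h₂⟩
  · exact Or.inr (Or.inl h)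
  · exact Or.inl h
  · exact Or.inr (Or.inr ⟨by rwa [Finset.inter_comm], by rwa [Finset.union_comm]⟩)

omit [Fintype V] in
lemma compatible_of_forall_subset_eq (hA : IsTube G A) (hB : IsTube G B)
    (hB_max : ∀ C, IsTube G C → B ⊆ C → B = C) : Compatible G A B := by
  by_cases hAB : A ⊆ B
  · exact Or.inl hAB
  have h_union : ¬ IsTube G (A ∪ B) := fun h =>
    hAB ((hB_max _ h Finset.subset_union_right).symm ▸ Finset.subset_union_left)
  refine Or.inr (Or.inr ⟨?_, h_union⟩)
  by_contra h
  exact h_union (hA.union_of_inter hB (Finset.nonempty_iff_ne_empty.2 h))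

end Compatible

section Components

variable {G : SimpleGraph V} {U K K' : Finset V}

lemma mem_gccSet_iff : K ∈ gccSet G U ↔
    IsTube G K ∧ K ⊆ U ∧ ∀ C, IsTube G C → C ⊆ U → K ⊆ C → K = C := by
  simp [gccSet, tubes]

lemma exists_mem_gccSet {x : V} (hx : x ∈ U) : ∃ K ∈ gccSet G U, x ∈ K := by
  let S := Finset.univ.filter fun C => IsTube G C ∧ C ⊆ U ∧ x ∈ C
  have hxS : {x} ∈ S := by simp [S, IsTube.singleton, hx]
  obtain ⟨K, hKS, hK_max⟩ := S.exists_max_image Finset.card ⟨_, hxS⟩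
  simp only [S, Finset.mem_filter, Finset.mem_univ, true_and] at hKS hK_max
  refine ⟨K, mem_gccSet_iff.2 ⟨hKS.1, hKS.2.1, fun C hC hCU hKC => ?_⟩, hKS.2.2⟩
  exact Finset.eq_of_subset_of_card_le hKC (hK_max C ⟨hC, hCU, hKC hKS.2.2⟩)

lemma mem_of_adj_of_mem_gccSet (hK : K ∈ gccSet G U) {a b : V} (ha : a ∈ K) (hb : b ∈ U)
    (hab : G.Adj a b) : b ∈ K := by
  obtain ⟨hKt, hKU, hK_max⟩ := mem_gccSet_iff.1 hK
  have h := hK_max _ (hKt.union_of_adj (IsTube.singleton G b) ha (Finset.mem_singleton_self b)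
    hab) (Finset.union_subset hKU (Finset.singleton_subset_iff.2 hb)) Finset.subset_union_left
  exact h ▸ Finset.mem_union_right _ (Finset.mem_singleton_self b)

lemma compatible_of_mem_gccSet (hK : K ∈ gccSet G U) (hK' : K' ∈ gccSet G U) :
    Compatible G K K' := by
  obtain ⟨hKt, hKU, hK_max⟩ := mem_gccSet_iff.1 hK
  obtain ⟨hK't, hK'U, hK'_max⟩ := mem_gccSet_iff.1 hK'
  have h_union : IsTube G (K ∪ K') → K = K' := fun h =>
    (hK_max _ h (Finset.union_subset hKU hK'U) Finset.subset_union_left).trans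
      (hK'_max _ h (Finset.union_subset hKU hK'U) Finset.subset_union_right).symm
  by_cases hKK' : K = K'
  · exact hKK' ▸ compatible_refl K
  refine Or.inr (Or.inr ⟨?_, mt h_union hKK'⟩)
  by_contra h
  exact hKK' (h_union (hKt.union_of_inter hK't (Finset.nonempty_iff_ne_empty.2 h)))

end Components

section Tubings

variable {G : SimpleGraph V} {T : Finset (Finset V)}

omit [Fintype V] in
lemma compatible_insert {r : Finset V} (hT : ∀ A ∈ T, ∀ B ∈ T, Compatible G A B)
    (hr : ∀ A ∈ T, Compatible G r A) :
    ∀ A ∈ insert r T, ∀ B ∈ insert r T, Compatible G A B := by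
  simp only [Finset.mem_insert, forall_eq_or_imp]
  exact ⟨⟨compatible_refl r, hr⟩, fun A hA => ⟨(hr A hA).symm, hT A hA⟩⟩

omit [Fintype V] in
lemma IsMaxTubing.mem_of_compatible (hT : IsMaxTubing G T) {r : Finset V} (hr : IsTube G r)
    (hr_compat : ∀ A ∈ T, Compatible G r A) : r ∈ T := by
  have h_tubing : IsTubing G (insert r T) := by
    refine ⟨?_, compatible_insert hT.1.2.1 hr_compat, fun K hK hK_max =>
      Finset.mem_insert_of_mem (hT.1.2.2 K hK hK_max)⟩
    simpa only [Finset.mem_insert, forall_eq_or_imp] using ⟨hr, hT.1.1⟩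
  exact hT.2 _ h_tubing (Finset.subset_insert r T) ▸ Finset.mem_insert_self r T

/-- Take a largest pairwise compatible family of tubes containing `𝒜`: by maximality it contains
every tube compatible with all of its members, in particular every inclusion-maximal tube. -/
lemma exists_isMaxTubing_superset {𝒜 : Finset (Finset V)} (h𝒜 : ∀ A ∈ 𝒜, IsTube G A)
    (h𝒜_compat : ∀ A ∈ 𝒜, ∀ B ∈ 𝒜, Compatible G A B) : ∃ T, IsMaxTubing G T ∧ 𝒜 ⊆ T := by
  let S := Finset.univ.filter fun T : Finset (Finset V) =>
    𝒜 ⊆ T ∧ (∀ A ∈ T, IsTube G A) ∧ ∀ A ∈ T, ∀ B ∈ T, Compatible G A B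
  obtain ⟨T, hTS, hT_max⟩ := S.exists_max_image Finset.card
    ⟨𝒜, by simpa [S] using ⟨h𝒜, h𝒜_compat⟩⟩
  simp only [S, Finset.mem_filter, Finset.mem_univ, true_and] at hTS hT_max
  obtain ⟨h𝒜T, hT, hT_compat⟩ := hTS
  have h_mem : ∀ r, IsTube G r → (∀ A ∈ T, Compatible G r A) → r ∈ T := by
    intro r hr hr_compat
    by_contra hrT
    have h := hT_max (insert r T) ⟨h𝒜T.trans (Finset.subset_insert r T),
      by simpa only [Finset.mem_insert, forall_eq_or_imp] using ⟨hr, hT⟩,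
      compatible_insert hT_compat hr_compat⟩
    rw [Finset.card_insert_of_notMem hrT] at h
    omega
  refine ⟨T, ⟨⟨hT, hT_compat, fun K hK hK_max => h_mem K hK fun A hA =>
    (compatible_of_forall_subset_eq (hT A hA) hK hK_max).symm⟩, ?_⟩, h𝒜T⟩
  intro T' hT' hTT'
  exact Finset.Subset.antisymm hTT' fun r hr =>
    h_mem r (hT'.1 r hr) fun A hA => hT'.2.1 r hr A (hTT' hA)

omit [Fintype V] in
lemma IsMaxTubing.insert_erase (hT : IsMaxTubing G T) {t t' : Finset V} (htT : t ∈ T)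
    (ht' : IsTube G t') (h_incompat : ¬ Compatible G t t')
    (hT_compat : ∀ r ∈ T.erase t, Compatible G r t')
    (h_back : ∀ r, IsTube G r → r ≠ t' → (∀ A ∈ T.erase t, Compatible G r A) →
      Compatible G r t' → Compatible G r t) :
    IsMaxTubing G (insert t' (T.erase t)) := by
  have hR : ∀ r ∈ T.erase t, r ∈ T := fun r hr => Finset.mem_of_mem_erase hr
  have h_tubing : IsTubing G (insert t' (T.erase t)) := by
    refine ⟨?_, compatible_insert (fun A hA B hB => hT.1.2.1 A (hR A hA) B (hR B hB))
      fun A hA => (hT_compat A hA).symm, fun K hK hK_max => ?_⟩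
    · simpa only [Finset.mem_insert, forall_eq_or_imp] using ⟨ht', fun r hr => hT.1.1 r (hR r hr)⟩
    · refine Finset.mem_insert_of_mem (Finset.mem_erase.2 ⟨?_, hT.1.2.2 K hK hK_max⟩)
      rintro rfl
      exact h_incompat (compatible_of_forall_subset_eq ht' hK hK_max).symm
  refine ⟨h_tubing, fun T' hT' hsub => Finset.Subset.antisymm hsub fun r hr => ?_⟩
  have hr_compat : ∀ A ∈ insert t' (T.erase t), Compatible G r A :=
    fun A hA => hT'.2.1 r hr A (hsub hA)
  rw [Finset.mem_insert]
  by_cases hrt' : r = t'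
  · exact Or.inl hrt'
  refine Or.inr (Finset.mem_erase.2 ⟨?_, hT.mem_of_compatible (hT'.1 r hr) fun A hA => ?_⟩)
  · rintro rfl
    exact h_incompat (hT'.2.1 r hr t' (hsub (Finset.mem_insert_self t' _)))
  · by_cases hAt : A = t
    · exact hAt ▸ h_back r (hT'.1 r hr) hrt' (fun B hB => hr_compat B
        (Finset.mem_insert_of_mem hB)) (hr_compat t' (Finset.mem_insert_self t' _))
    · exact hr_compat A (Finset.mem_insert_of_mem (Finset.mem_erase.2 ⟨hAt, hA⟩))

end Tubings

section Exchange

variable {G : SimpleGraph V} {s : Finset V} {v v' : V}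

omit [Fintype V] in
lemma not_compatible_erase_erase (hs : IsTube G s) (hv : v ∈ s) (hv' : v' ∈ s) (hne : v ≠ v') :
    ¬ Compatible G (s.erase v') (s.erase v) := by
  have h_union : s.erase v' ∪ s.erase v = s := by
    ext x; by_cases x = v <;> grind
  rintro (h | h | ⟨-, h⟩)
  · exact Finset.notMem_erase v s (h (Finset.mem_erase.2 ⟨hne, hv⟩))
  · exact Finset.notMem_erase v' s (h (Finset.mem_erase.2 ⟨hne.symm, hv'⟩))
  · rw [h_union] at h
    exact h hs

/-- Inside the tube `s.erase v`, every component of `s \ {v, v'}` is attached to `v'`; so a tube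
through `v'` that is compatible with all these components must swallow them all. -/
lemma eq_erase_of_forall_compatible_gccSet (ht' : IsTube G (s.erase v))
    {r : Finset V} (hr : IsTube G r) (hrt' : r ⊆ s.erase v) (hv'r : v' ∈ r)
    (hr_compat : ∀ C ∈ gccSet G (s \ {v, v'}), Compatible G r C) : r = s.erase v := by
  refine Finset.Subset.antisymm hrt' fun y hy => ?_
  by_cases hyv' : y = v'
  · exact hyv' ▸ hv'r
  have h_mem_U : ∀ z ∈ s.erase v, z ≠ v' → z ∈ s \ {v, v'} := by
    intro z hz hzv'
    grind
  obtain ⟨C, hC, hyC⟩ := exists_mem_gccSet (G := G) (h_mem_U y hy hyv')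
  obtain ⟨hCt, hCU, -⟩ := mem_gccSet_iff.1 hC
  have hv'C : v' ∉ C := fun h => by simpa using hCU h
  rcases hr_compat C hC with h | h | ⟨-, h⟩
  · exact absurd (h hv'r) hv'C
  · exact h hyC
  · obtain ⟨x, hxC, z, hz, hzC, hxz⟩ :=
      ht'.exists_adj_of_mem_of_notMem hy (hrt' hv'r) hyC hv'C
    have hzv' : z = v' := by
      by_contra hzv'
      exact hzC (mem_of_adj_of_mem_gccSet hC hxC (h_mem_U z hz hzv') hxz)
    subst hzv'
    exact absurd (hr.union_of_adj hCt hv'r hxC hxz.symm) h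

lemma compatible_erase_of_compatible_erase (hs : IsTube G s) (hv' : v' ∈ s) (hne : v ≠ v')
    (ht : IsTube G (s.erase v')) {r : Finset V} (hr : IsTube G r) (hrs : Compatible G r s)
    (hrt : Compatible G r (s.erase v'))
    (hr_compat : ∀ C ∈ gccSet G (s \ {v, v'}), Compatible G r C) (hrt_ne : r ≠ s.erase v') :
    Compatible G r (s.erase v) := by
  rcases hrs with hrs | hsr | ⟨hrs, hrs_union⟩
  · rcases hrt with hrt | htr | ⟨hrt, hrt_union⟩
    · by_cases hvr : v ∈ r
      · rw [Finset.pair_comm] at hr_compat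
        exact absurd (eq_erase_of_forall_compatible_gccSet ht hr hrt hvr hr_compat) hrt_ne
      · exact Or.inl fun x hx => Finset.mem_erase.2 ⟨fun h => hvr (h ▸ hx), hrs hx⟩
    · have hv'r : v' ∈ r := by
        by_contra hv'r
        exact hrt_ne (Finset.Subset.antisymm
          (fun x hx => Finset.mem_erase.2 ⟨fun h => hv'r (h ▸ hx), hrs hx⟩) htr)
      refine Or.inr (Or.inl ((Finset.erase_subset v s).trans ?_))
      rw [← Finset.insert_erase hv']
      exact Finset.insert_subset hv'r htr
    · have h_union : r ∪ s.erase v' = s := by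
        obtain ⟨x, hx⟩ := hr.1
        have hxv' : x = v' := by
          by_contra h
          exact Finset.notMem_empty x
            (hrt ▸ Finset.mem_inter.2 ⟨hx, Finset.mem_erase.2 ⟨h, hrs hx⟩⟩)
        subst hxv'
        ext y; by_cases y = x <;> grind
      rw [h_union] at hrt_union
      exact absurd hs hrt_union
  · exact Or.inr (Or.inl ((Finset.erase_subset v s).trans hsr))
  · refine Or.inr (Or.inr ⟨Finset.subset_empty.1 (hrs ▸ Finset.inter_subset_inter_left
      (Finset.erase_subset v s)), fun h => hrs_union ?_⟩)
    have h_union : r ∪ s.erase v ∪ s = r ∪ s := by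
      rw [Finset.union_assoc, Finset.union_eq_right.2 (Finset.erase_subset v s)]
    rw [← h_union]
    exact h.union_of_inter hs ⟨v', by simp [hv', hne.symm]⟩

lemma exchangeableT_erase_erase (hs : IsTube G s) (hv : v ∈ s) (hv' : v' ∈ s) (hne : v ≠ v')
    (ht : IsTube G (s.erase v')) (ht' : IsTube G (s.erase v)) :
    ExchangeableT G (s.erase v') (s.erase v) := by
  set t := s.erase v'
  set t' := s.erase v
  set comps := gccSet G (s \ {v, v'})
  have h_incompat : ¬ Compatible G t t' := not_compatible_erase_erase hs hv hv' hne
  have hC_sub : ∀ C ∈ comps, C ⊆ s \ {v, v'} := fun C hC => (mem_gccSet_iff.1 hC).2.1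
  have hC_ne : ∀ C ∈ comps, C ≠ t := by
    intro C hC hCt
    simpa using hC_sub C hC (hCt ▸ Finset.mem_erase.2 ⟨hne, hv⟩ : v ∈ C)
  have h𝒜_tube : ∀ A ∈ insert s (insert t comps), IsTube G A := by
    simpa only [Finset.mem_insert, forall_eq_or_imp] using
      ⟨hs, ht, fun C hC => (mem_gccSet_iff.1 hC).1⟩
  have h𝒜_compat : ∀ A ∈ insert s (insert t comps), ∀ B ∈ insert s (insert t comps),
      Compatible G A B := by
    have hU_t : s \ {v, v'} ⊆ t := fun x hx => by grind
    refine compatible_insert (compatible_insert (fun _ hC _ hC' => compatible_of_mem_gccSet hC hC')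
      fun C hC => Or.inr (Or.inl ((hC_sub C hC).trans hU_t))) ?_
    simpa only [Finset.mem_insert, forall_eq_or_imp] using
      ⟨Or.inr (Or.inl (Finset.erase_subset v' s)),
        fun C hC => Or.inr (Or.inl ((hC_sub C hC).trans Finset.sdiff_subset))⟩
  obtain ⟨T, hT, h𝒜T⟩ := exists_isMaxTubing_superset h𝒜_tube h𝒜_compat
  simp only [Finset.insert_subset_iff] at h𝒜T
  obtain ⟨hsT, htT, hcompsT⟩ := h𝒜T
  have ht'T : t' ∉ T.erase t := fun h =>
    h_incompat (hT.1.2.1 t htT t' (Finset.mem_of_mem_erase h))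
  refine ⟨fun h => h_incompat (h ▸ compatible_refl t), T, insert t' (T.erase t), hT,
    hT.insert_erase htT ht' h_incompat ?_ ?_, htT, Finset.mem_insert_self t' _,
    (Finset.erase_insert ht'T).symm⟩
  · intro r hr
    have hrT := Finset.mem_of_mem_erase hr
    exact compatible_erase_of_compatible_erase hs hv' hne ht (hT.1.1 r hrT)
      (hT.1.2.1 r hrT s hsT) (hT.1.2.1 r hrT t htT)
      (fun C hC => hT.1.2.1 r hrT C (hcompsT hC)) (Finset.ne_of_mem_erase hr)
  · intro r hr hrt' hr_compat hrt
    refine compatible_erase_of_compatible_erase hs hv hne.symm ht' hr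
      (hr_compat s (Finset.mem_erase.2 ⟨(Finset.erase_ssubset hv').ne', hsT⟩)) hrt
      (fun C hC => ?_) hrt'
    rw [Finset.pair_comm] at hC
    exact hr_compat C (Finset.mem_erase.2 ⟨hC_ne C hC, hcompsT hC⟩)

end Exchange

theorem stmt16 (G : SimpleGraph V) (t t' : Finset V)
    (ht : IsTube G t) (ht' : IsTube G t') :
    MaxExchPair G t t' ↔
      ∃ s v v', IsTube G s ∧ v ∈ s ∧ v' ∈ s ∧ v ≠ v' ∧
        NonDisc G s v ∧ NonDisc G s v' ∧ t = s.erase v' ∧ t' = s.erase v := by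
  constructor
  · rintro ⟨-, v, v', htt', ht't, -, -, y, hy, hv'y⟩
    obtain ⟨hvt, hvt'⟩ := Finset.mem_sdiff.1 (htt' ▸ Finset.mem_singleton_self v)
    obtain ⟨hv't', hv't⟩ := Finset.mem_sdiff.1 (ht't ▸ Finset.mem_singleton_self v')
    have hs_erase_v : (t ∪ t').erase v = t' := by
      rw [Finset.union_comm]
      exact union_erase_of_sdiff_eq_singleton htt'
    have hs_erase_v' : (t ∪ t').erase v' = t := union_erase_of_sdiff_eq_singleton ht't
    refine ⟨t ∪ t', v, v', ht.union_of_adj ht' hy hv't' hv'y.symm,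
      Finset.mem_union_left _ hvt, Finset.mem_union_right _ hv't', fun h => hv't (h ▸ hvt),
      ⟨Finset.mem_union_left _ hvt, Or.inr (by rwa [hs_erase_v])⟩,
      ⟨Finset.mem_union_right _ hv't', Or.inr (by rwa [hs_erase_v'])⟩,
      hs_erase_v'.symm, hs_erase_v.symm⟩
  · rintro ⟨s, v, v', hs, hv, hv', hne, -, -, rfl, rfl⟩
    exact ⟨exchangeableT_erase_erase hs hv hv' hne ht ht', v, v',
      Finset.erase_sdiff_erase hne.symm hv, Finset.erase_sdiff_erase hne hv',
      hs.nbrOf_erase hv hv' hne, hs.nbrOf_erase hv' hv hne.symm⟩
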